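/- For every even integer M ≥ 4 and every integer k ≥ 0 there is a constant C > 0 such that for every measurable φ : ℝ → ℂ with ‖φ/(1+|y|^{M+k})‖_{L∞} < ∞: ‖P_-(φ)/(1 + |y|^{M+k})‖_{L∞(ℝ)} ≤ C·‖φ/(1 + |y|^{M+k})‖_{L∞(ℝ)}. -/

import Mathlib

open MeasureTheory

/-- The `m`-th rescaled Hermite polynomial. -/
noncomputable def hpoly (m : ℕ) (y : ℝ) : ℝ :=
  ∑ n ∈ Finset.range (m / 2 + 1),
    ((Nat.factorial m : ℝ) / ((Nat.factorial n : ℝ) * (Nat.factorial (m - 2 * n) : ℝ))) *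
      (-1 : ℝ) ^ n * y ^ (m - 2 * n)

/-- The Gaussian weight `ρ(y) = (4π)^{−1/2} e^{−y²/4}`. -/
noncomputable def gw (y : ℝ) : ℝ := (4 * Real.pi) ^ (-(1 : ℝ) / 2) * Real.exp (-y ^ 2 / 4)

/-- Coefficient of `φ` on `h_n`: `Q_n(φ) = (∫ φ h_n ρ)/(∫ h_n² ρ)`. -/
noncomputable def Qcoef (r : ℝ → ℂ) (n : ℕ) : ℂ :=
  (∫ y : ℝ, r y * ((hpoly n y : ℝ) : ℂ) * ((gw y : ℝ) : ℂ)) /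
    (((∫ y : ℝ, (hpoly n y) ^ 2 * gw y) : ℝ) : ℂ)

/-- The "infinite-dimensional" projection `P_-φ = φ − Σ_{n≤M} Q_n(φ) h_n`. -/
noncomputable def Pminus (M : ℕ) (r : ℝ → ℂ) (y : ℝ) : ℂ :=
  r y - ∑ n ∈ Finset.range (M + 1), Qcoef r n * ((hpoly n y : ℝ) : ℂ)

/-! Since `P_-` differs from the identity by a projection of rank `M + 1`, it suffices to bound
each term `Q_n(φ) h_n`. Writing `w(y) = 1 + |y|^{M+k}`, the coefficient satisfies
`|Q_n(φ)| ≤ D ∫ w |h_n| ρ / ∫ h_n² ρ` whenever `|φ| ≤ D w`, and the Gaussian weight makes these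
integrals finite; since `deg h_n ≤ M ≤ M + k`, also `|h_n| ≤ A_n w`. -/

open Finset

lemma abs_pow_le_one_add_abs_pow {j p : ℕ} (h : j ≤ p) (y : ℝ) : |y| ^ j ≤ 1 + |y| ^ p := by
  rcases le_total |y| 1 with hy | hy
  · linarith [pow_le_one₀ (abs_nonneg y) hy (n := j), pow_nonneg (abs_nonneg y) p]
  · linarith [pow_le_pow_right₀ hy h]

noncomputable def hpolyBound (m : ℕ) : ℝ :=
  ∑ n ∈ range (m / 2 + 1),
    (Nat.factorial m : ℝ) / ((Nat.factorial n : ℝ) * (Nat.factorial (m - 2 * n) : ℝ))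

lemma hpolyBound_nonneg (m : ℕ) : 0 ≤ hpolyBound m :=
  sum_nonneg fun _ _ => by positivity

lemma abs_hpoly_le {m p : ℕ} (hm : m ≤ p) (y : ℝ) :
    |hpoly m y| ≤ hpolyBound m * (1 + |y| ^ p) := by
  rw [hpolyBound, sum_mul]
  refine (abs_sum_le_sum_abs _ _).trans (sum_le_sum fun n _ => ?_)
  rw [abs_mul, abs_mul, abs_pow, abs_pow, abs_neg, abs_one, one_pow, mul_one,
    abs_of_nonneg (by positivity)]
  exact mul_le_mul_of_nonneg_left (abs_pow_le_one_add_abs_pow ((Nat.sub_le _ _).trans hm) y)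
    (by positivity)

lemma gw_nonneg (y : ℝ) : 0 ≤ gw y := by
  unfold gw
  positivity

@[fun_prop]
lemma continuous_gw : Continuous gw := by
  unfold gw
  fun_prop

@[fun_prop]
lemma continuous_hpoly (m : ℕ) : Continuous (hpoly m) := by
  unfold hpoly
  fun_prop

lemma integrable_abs_pow_mul_gw (q : ℕ) : Integrable fun y : ℝ => |y| ^ q * gw y := by
  have h := (integrable_rpow_mul_exp_neg_mul_sq (b := 1 / 4) (by norm_num)
    (s := q) (by linarith [(q.cast_nonneg : (0 : ℝ) ≤ q)])).abs.const_mul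
    ((4 * Real.pi) ^ (-(1 : ℝ) / 2))
  refine h.congr (ae_of_all _ fun y => ?_)
  simp only [Real.rpow_natCast, abs_mul, abs_pow, Real.abs_exp, gw]
  ring_nf

lemma integrable_one_add_abs_pow_mul_one_add_abs_pow_mul_gw (p q : ℕ) :
    Integrable fun y : ℝ => (1 + |y| ^ p) * (1 + |y| ^ q) * gw y := by
  have h := (((integrable_abs_pow_mul_gw 0).add (integrable_abs_pow_mul_gw p)).add
    (integrable_abs_pow_mul_gw q)).add (integrable_abs_pow_mul_gw (p + q))
  refine h.congr (ae_of_all _ fun y => ?_)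
  simp only [Pi.add_apply, pow_zero, pow_add]
  ring

lemma integrable_one_add_abs_pow_mul_abs_hpoly_mul_gw (p m : ℕ) :
    Integrable fun y : ℝ => (1 + |y| ^ p) * |hpoly m y| * gw y := by
  refine ((integrable_one_add_abs_pow_mul_one_add_abs_pow_mul_gw p m).const_mul
    (hpolyBound m)).mono' (by fun_prop : Continuous _).aestronglyMeasurable
    (ae_of_all _ fun y => ?_)
  rw [Real.norm_of_nonneg (by have := gw_nonneg y; positivity)]
  calc (1 + |y| ^ p) * |hpoly m y| * gw y
      ≤ (1 + |y| ^ p) * (hpolyBound m * (1 + |y| ^ m)) * gw y := by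
        gcongr
        exacts [gw_nonneg y, abs_hpoly_le le_rfl y]
    _ = _ := by ring

-- Positivity of `∫ h_n² ρ` is never needed: when it vanishes, both sides are `0` (`x / 0 = 0`).
lemma norm_Qcoef_le {φ : ℝ → ℂ} {D : ℝ} (p n : ℕ) (hφ : ∀ y, ‖φ y‖ ≤ D * (1 + |y| ^ p)) :
    ‖Qcoef φ n‖ ≤ D * ((∫ y, (1 + |y| ^ p) * |hpoly n y| * gw y) /
      |∫ y, hpoly n y ^ 2 * gw y|) := by
  rw [Qcoef, norm_div, Complex.norm_real, Real.norm_eq_abs, ← mul_div_assoc, ← integral_const_mul]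
  gcongr
  refine norm_integral_le_of_norm_le
    ((integrable_one_add_abs_pow_mul_abs_hpoly_mul_gw p n).const_mul D) (ae_of_all _ fun y => ?_)
  rw [norm_mul, norm_mul, Complex.norm_real, Complex.norm_real, Real.norm_eq_abs,
    Real.norm_of_nonneg (gw_nonneg y), ← mul_assoc, ← mul_assoc]
  gcongr
  exacts [gw_nonneg y, hφ y]

lemma norm_Pminus_le (M : ℕ) (φ : ℝ → ℂ) (y : ℝ) :
    ‖Pminus M φ y‖ ≤ ‖φ y‖ + ∑ n ∈ range (M + 1), ‖Qcoef φ n‖ * |hpoly n y| := by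
  refine (norm_sub_le _ _).trans (add_le_add le_rfl ((norm_sum_le _ _).trans_eq ?_))
  simp only [norm_mul, Complex.norm_real, Real.norm_eq_abs]

theorem stmt17_general (M : ℕ) (k : ℕ) :
    ∃ C : ℝ, 0 < C ∧
      ∀ φ : ℝ → ℂ, Measurable φ →
        ∀ D : ℝ, (∀ y : ℝ, ‖φ y‖ ≤ D * (1 + |y| ^ (M + k))) →
        ∀ y : ℝ, ‖Pminus M φ y‖ ≤ C * D * (1 + |y| ^ (M + k)) := by
  set K : ℕ → ℝ := fun n => (∫ y, (1 + |y| ^ (M + k)) * |hpoly n y| * gw y) /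
    |∫ y, hpoly n y ^ 2 * gw y|
  have hK (n : ℕ) : 0 ≤ K n :=
    div_nonneg (integral_nonneg fun y => by have := gw_nonneg y; positivity) (abs_nonneg _)
  have hC : 0 ≤ ∑ n ∈ range (M + 1), K n * hpolyBound n :=
    sum_nonneg fun n _ => mul_nonneg (hK n) (hpolyBound_nonneg n)
  refine ⟨1 + ∑ n ∈ range (M + 1), K n * hpolyBound n, by linarith, fun φ _ D hφ y => ?_⟩
  have hD : 0 ≤ D := nonneg_of_mul_nonneg_left ((norm_nonneg _).trans (hφ 0)) (by positivity)
  have hterm (n : ℕ) (hn : n ∈ range (M + 1)) :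
      ‖Qcoef φ n‖ * |hpoly n y| ≤ K n * hpolyBound n * (D * (1 + |y| ^ (M + k))) :=
    have hnM : n ≤ M + k := (Nat.lt_succ_iff.mp (mem_range.mp hn)).trans (Nat.le_add_right M k)
    calc ‖Qcoef φ n‖ * |hpoly n y| ≤ D * K n * (hpolyBound n * (1 + |y| ^ (M + k))) :=
          mul_le_mul (norm_Qcoef_le _ n hφ) (abs_hpoly_le hnM y) (abs_nonneg _)
            (mul_nonneg hD (hK n))
      _ = K n * hpolyBound n * (D * (1 + |y| ^ (M + k))) := by ring
  calc ‖Pminus M φ y‖ ≤ ‖φ y‖ + ∑ n ∈ range (M + 1), ‖Qcoef φ n‖ * |hpoly n y| :=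
        norm_Pminus_le M φ y
    _ ≤ D * (1 + |y| ^ (M + k)) +
          (∑ n ∈ range (M + 1), K n * hpolyBound n) * (D * (1 + |y| ^ (M + k))) := by
        rw [sum_mul]
        exact add_le_add (hφ y) (sum_le_sum hterm)
    _ = (1 + ∑ n ∈ range (M + 1), K n * hpolyBound n) * D * (1 + |y| ^ (M + k)) := by ring

/-- for every even `M ≥ 4` and `k ≥ 0`, `P_-` is bounded in the
weighted L∞ norm: `‖P_-(φ)/(1+|y|^{M+k})‖_{L∞} ≤ C‖φ/(1+|y|^{M+k})‖_{L∞}`,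
formulated via arbitrary uniform bounds `D`. -/
theorem stmt17 (M : ℕ) (hMeven : Even M) (hM4 : 4 ≤ M) (k : ℕ) :
    ∃ C : ℝ, 0 < C ∧
      ∀ φ : ℝ → ℂ, Measurable φ →
        ∀ D : ℝ, (∀ y : ℝ, ‖φ y‖ ≤ D * (1 + |y| ^ (M + k))) →
        ∀ y : ℝ, ‖Pminus M φ y‖ ≤ C * D * (1 + |y| ^ (M + k)) :=
  stmt17_general M k
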